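/- Consider two LPs min c^T x s.t. Ax ∘ b, l ≤ x ≤ u and min ĉ^T x s.t. Âx ∘̂ b̂, l̂ ≤ x ≤ û, where ∘ ∈ {≤, =, ≥}^m componentwise. Suppose there is a stable partition pair (I_1,...,I_s of rows, J_1,...,J_t of columns) such that: (b_i, ∘_i) = (b̂_i, ∘̂_i) is constant on each I_p; (c_j, l_j, u_j) = (ĉ_j, l̂_j, û_j) is constant on each J_q; and the row/column block sums of A and Â agree as in the stable-partition conditions. Then if x is feasible for the first LP, the block-average x̂ (x̂_j = (1/|J_q|)∑_{j'∈J_q} x_{j'} for j ∈ J_q) is feasible for the second LP. In particular, the first LP is feasible if and only if the second LP is feasible. -/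

import Mathlib

/-!
Fix a row `i` in the row block `I` and a column block `J`. Since `x̂` is constant on `J`, the
`J`-part of `(Â x̂)ᵢ` is `Rᵢ · avg_J x`, where `Rᵢ` is the common `J`-row-sum of the rows in `I`.
On the other side, the column sums of `A` over `I` are constant on `J`, and double counting the
`I × J` block shows that `Σ_{i' ∈ I} Σ_{j ∈ J} A_{i'j} x_j = |I| · Rᵢ · avg_J x`. Hence `(Â x̂)ᵢ` is
the average of `(A x)_{i'}` over `i' ∈ I`, and averages preserve `≤ bᵢ`, `= bᵢ`, `≥ bᵢ` as well as
the (blockwise constant) box constraints. The hypotheses are symmetric in `A` and `Â`, which gives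
the converse.
-/

/-- Constraint relation `∘ᵢ ∈ {≤, =, ≥}`. -/
def cRel : Ordering → ℝ → ℝ → Prop
  | Ordering.lt => fun a b => a ≤ b
  | Ordering.eq => fun a b => a = b
  | Ordering.gt => fun a b => a ≥ b

/-- Feasibility of `x` for the LP with data `(A, b, l, u, ∘)`:
`Ax ∘ b` componentwise and `l ≤ x ≤ u`. -/
def Feas {m n : ℕ} (A : Fin m → Fin n → ℝ) (b : Fin m → ℝ) (l u : Fin n → ℝ)
    (o : Fin m → Ordering) (x : Fin n → ℝ) : Prop :=
  (∀ i, cRel (o i) (∑ j, A i j * x j) (b i)) ∧ ∀ j, l j ≤ x j ∧ x j ≤ u j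

/-- Block average of `x` over the column partition given by the fibers of `κ`. -/
noncomputable def blockAvg {n t : ℕ} (κ : Fin n → Fin t) (x : Fin n → ℝ) : Fin n → ℝ :=
  fun j => (∑ j' ∈ Finset.univ.filter (fun j' => κ j' = κ j), x j') /
    (Finset.univ.filter (fun j' => κ j' = κ j)).card

open Finset

theorem cRel_sum_div_card {ι : Type*} {s : Finset ι} (hs : s.Nonempty) {r : Ordering}
    {f : ι → ℝ} {c : ℝ} (h : ∀ i ∈ s, cRel r (f i) c) :
    cRel r ((∑ i ∈ s, f i) / #s) c := by
  rw [← expect_eq_sum_div_card]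
  cases r
  · exact expect_le hs h
  · exact (expect_congr rfl h).trans (expect_const hs c)
  · exact le_expect hs h

theorem sum_mul_eq_sum_mul_sum_div_card {ι 𝕜 : Type*} [Field 𝕜] [CharZero 𝕜] (J : Finset ι)
    {c : ι → 𝕜} (hc : ∀ j ∈ J, ∀ j' ∈ J, c j = c j') (x : ι → 𝕜) :
    ∑ j ∈ J, c j * x j = (∑ j ∈ J, c j) * (∑ j ∈ J, x j) / #J := by
  obtain rfl | ⟨j₀, hj₀⟩ := J.eq_empty_or_nonempty
  · simp
  have hJ : (#J : 𝕜) ≠ 0 := by exact_mod_cast (card_pos.mpr ⟨j₀, hj₀⟩).ne'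
  have hc₀ : ∀ j ∈ J, c j = c j₀ := fun j hj => hc j hj j₀ hj₀
  rw [sum_congr rfl hc₀, sum_congr rfl fun j hj => by rw [hc₀ j hj], ← mul_sum, sum_const,
    nsmul_eq_mul]
  field_simp

section BlockAverage

variable {m n s t : ℕ} {ρ : Fin m → Fin s} {κ : Fin n → Fin t}

theorem blockAvg_apply_of_eq {x : Fin n → ℝ} {q : Fin t} {j : Fin n} (hj : κ j = q) :
    blockAvg κ x j = (∑ j' ∈ {j' | κ j' = q}, x j') / #{j' | κ j' = q} := by
  subst hj; rfl

theorem blockAvg_bounds {l u x : Fin n → ℝ} (hlu : ∀ j j', κ j = κ j' → l j = l j' ∧ u j = u j')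
    (hx : ∀ j, l j ≤ x j ∧ x j ≤ u j) (j : Fin n) :
    l j ≤ blockAvg κ x j ∧ blockAvg κ x j ≤ u j := by
  have hJ : ({j' | κ j' = κ j} : Finset (Fin n)).Nonempty := ⟨j, by simp⟩
  have hmem {j'} (hj' : j' ∈ ({j' | κ j' = κ j} : Finset (Fin n))) := hlu j' j (by simpa using hj')
  exact ⟨cRel_sum_div_card (r := .gt) hJ fun j' hj' => (hmem hj').1 ▸ (hx j').1,
    cRel_sum_div_card (r := .lt) hJ fun j' hj' => (hmem hj').2 ▸ (hx j').2⟩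

variable {A Â : Fin m → Fin n → ℝ}

theorem sum_block_mul_blockAvg
    (hrow : ∀ i i', ρ i = ρ i' → ∀ q,
      ∑ j ∈ {j | κ j = q}, A i' j = ∑ j ∈ {j | κ j = q}, Â i j)
    (hcol : ∀ j j', κ j = κ j' → ∀ p,
      ∑ i ∈ {i | ρ i = p}, A i j = ∑ i ∈ {i | ρ i = p}, A i j')
    (x : Fin n → ℝ) (i : Fin m) (q : Fin t) :
    ∑ j ∈ {j | κ j = q}, Â i j * blockAvg κ x j =
      (∑ i' ∈ {i' | ρ i' = ρ i}, ∑ j ∈ {j | κ j = q}, A i' j * x j) / #{i' | ρ i' = ρ i} := by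
  set I : Finset (Fin m) := {i' | ρ i' = ρ i}
  set J : Finset (Fin n) := {j | κ j = q}
  have hI : (#I : ℝ) ≠ 0 := by exact_mod_cast (card_pos.mpr ⟨i, by simp [I]⟩).ne'
  have hcolJ : ∀ j ∈ J, ∀ j' ∈ J, ∑ i' ∈ I, A i' j = ∑ i' ∈ I, A i' j' := by
    intro j hj j' hj'
    simp only [J, mem_filter, mem_univ, true_and] at hj hj'
    exact hcol j j' (hj.trans hj'.symm) (ρ i)
  have hrowI : ∀ i' ∈ I, ∑ j ∈ J, A i' j = ∑ j ∈ J, Â i j := by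
    intro i' hi'
    simp only [I, mem_filter, mem_univ, true_and] at hi'
    exact hrow i i' hi'.symm q
  calc ∑ j ∈ J, Â i j * blockAvg κ x j
      = (∑ j ∈ J, Â i j) * ((∑ j ∈ J, x j) / #J) := by
        rw [sum_mul]
        refine sum_congr rfl fun j hj => ?_
        rw [blockAvg_apply_of_eq (by simpa [J] using hj)]
    _ = (∑ j ∈ J, (∑ i' ∈ I, A i' j) * x j) / #I := by
        rw [sum_mul_eq_sum_mul_sum_div_card J hcolJ, sum_comm, sum_congr rfl hrowI, sum_const,
          nsmul_eq_mul]
        field_simp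
    _ = (∑ i' ∈ I, ∑ j ∈ J, A i' j * x j) / #I := by
        simp_rw [sum_mul]
        rw [sum_comm]

variable {b : Fin m → ℝ} {l u : Fin n → ℝ} {o : Fin m → Ordering}

theorem feas_blockAvg
    (hbo : ∀ i i', ρ i = ρ i' → b i = b i' ∧ o i = o i')
    (hlu : ∀ j j', κ j = κ j' → l j = l j' ∧ u j = u j')
    (hrow : ∀ i i', ρ i = ρ i' → ∀ q,
      ∑ j ∈ {j | κ j = q}, A i' j = ∑ j ∈ {j | κ j = q}, Â i j)
    (hcol : ∀ j j', κ j = κ j' → ∀ p,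
      ∑ i ∈ {i | ρ i = p}, A i j = ∑ i ∈ {i | ρ i = p}, A i j')
    {x : Fin n → ℝ} (hx : Feas A b l u o x) :
    Feas Â b l u o (blockAvg κ x) := by
  refine ⟨fun i => ?_, blockAvg_bounds hlu hx.2⟩
  have hrowsum : ∑ j, Â i j * blockAvg κ x j =
      (∑ i' ∈ {i' | ρ i' = ρ i}, ∑ j, A i' j * x j) / #{i' | ρ i' = ρ i} := by
    simp_rw [← sum_fiberwise univ κ, sum_block_mul_blockAvg hrow hcol, ← sum_div]
    rw [sum_comm]
  rw [hrowsum]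
  refine cRel_sum_div_card ⟨i, by simp⟩ fun i' hi' => ?_
  obtain ⟨hb, ho⟩ := hbo i' i (by simpa using hi')
  exact hb ▸ ho ▸ hx.1 i'

end BlockAverage

theorem stmt4_general {m n s t : ℕ}
    (A Ahat : Fin m → Fin n → ℝ) (b bhat : Fin m → ℝ)
    (c l lhat u uhat : Fin n → ℝ) (o ohat : Fin m → Ordering)
    (ρ : Fin m → Fin s) (κ : Fin n → Fin t)
    (hb : ∀ i, b i = bhat i) (ho : ∀ i, o i = ohat i)
    (hVconst : ∀ i i', ρ i = ρ i' → b i = b i' ∧ o i = o i')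
    (hl : ∀ j, l j = lhat j) (hu : ∀ j, u j = uhat j)
    (hWconst : ∀ j j', κ j = κ j' → c j = c j' ∧ l j = l j' ∧ u j = u j')
    (hrow : ∀ i i', ρ i = ρ i' → ∀ q,
      ∑ j ∈ Finset.univ.filter (fun j => κ j = q), A i j =
      ∑ j ∈ Finset.univ.filter (fun j => κ j = q), A i' j)
    (hrowhat : ∀ i q,
      ∑ j ∈ Finset.univ.filter (fun j => κ j = q), A i j =
      ∑ j ∈ Finset.univ.filter (fun j => κ j = q), Ahat i j)
    (hcol : ∀ j j', κ j = κ j' → ∀ p,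
      ∑ i ∈ Finset.univ.filter (fun i => ρ i = p), A i j =
      ∑ i ∈ Finset.univ.filter (fun i => ρ i = p), A i j')
    (hcolhat : ∀ j p,
      ∑ i ∈ Finset.univ.filter (fun i => ρ i = p), A i j =
      ∑ i ∈ Finset.univ.filter (fun i => ρ i = p), Ahat i j) :
    (∀ x : Fin n → ℝ, Feas A b l u o x → Feas Ahat bhat lhat uhat ohat (blockAvg κ x)) ∧
    ((∃ x, Feas A b l u o x) ↔ ∃ x, Feas Ahat bhat lhat uhat ohat x) := by
  obtain rfl : b = bhat := funext hb
  obtain rfl : o = ohat := funext ho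
  obtain rfl : l = lhat := funext hl
  obtain rfl : u = uhat := funext hu
  have hlu j j' (h : κ j = κ j') : l j = l j' ∧ u j = u j' := (hWconst j j' h).2
  have fwd x (hx : Feas A b l u o x) : Feas Ahat b l u o (blockAvg κ x) :=
    feas_blockAvg hVconst hlu (fun i i' h q => (hrow i' i h.symm q).trans (hrowhat i q)) hcol hx
  have bwd x (hx : Feas Ahat b l u o x) : Feas A b l u o (blockAvg κ x) :=
    feas_blockAvg hVconst hlu (fun i i' h q => (hrowhat i' q).symm.trans (hrow i' i h.symm q))
      (fun j j' h p => (hcolhat j p).symm.trans ((hcol j j' h p).trans (hcolhat j' p))) hx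
  exact ⟨fwd, fun ⟨x, hx⟩ => ⟨_, fwd x hx⟩, fun ⟨x, hx⟩ => ⟨_, bwd x hx⟩⟩

/-- Feasibility transfer between two LPs related by a stable partition pair:
if `x` is feasible for the first LP, its block average is feasible for the
second; in particular the two LPs are feasible simultaneously. -/
theorem stmt4 {m n s t : ℕ}
    (A Ahat : Fin m → Fin n → ℝ) (b bhat : Fin m → ℝ)
    (c chat l lhat u uhat : Fin n → ℝ) (o ohat : Fin m → Ordering)
    (ρ : Fin m → Fin s) (κ : Fin n → Fin t)
    (hρ : Function.Surjective ρ) (hκ : Function.Surjective κ)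
    (hb : ∀ i, b i = bhat i) (ho : ∀ i, o i = ohat i)
    (hVconst : ∀ i i', ρ i = ρ i' → b i = b i' ∧ o i = o i')
    (hc : ∀ j, c j = chat j) (hl : ∀ j, l j = lhat j) (hu : ∀ j, u j = uhat j)
    (hWconst : ∀ j j', κ j = κ j' → c j = c j' ∧ l j = l j' ∧ u j = u j')
    (hrow : ∀ i i', ρ i = ρ i' → ∀ q,
      ∑ j ∈ Finset.univ.filter (fun j => κ j = q), A i j =
      ∑ j ∈ Finset.univ.filter (fun j => κ j = q), A i' j)
    (hrowhat : ∀ i q,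
      ∑ j ∈ Finset.univ.filter (fun j => κ j = q), A i j =
      ∑ j ∈ Finset.univ.filter (fun j => κ j = q), Ahat i j)
    (hcol : ∀ j j', κ j = κ j' → ∀ p,
      ∑ i ∈ Finset.univ.filter (fun i => ρ i = p), A i j =
      ∑ i ∈ Finset.univ.filter (fun i => ρ i = p), A i j')
    (hcolhat : ∀ j p,
      ∑ i ∈ Finset.univ.filter (fun i => ρ i = p), A i j =
      ∑ i ∈ Finset.univ.filter (fun i => ρ i = p), Ahat i j) :
    (∀ x : Fin n → ℝ, Feas A b l u o x → Feas Ahat bhat lhat uhat ohat (blockAvg κ x)) ∧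
    ((∃ x, Feas A b l u o x) ↔ ∃ x, Feas Ahat bhat lhat uhat ohat x) :=
  stmt4_general A Ahat b bhat c l lhat u uhat o ohat ρ κ hb ho hVconst hl hu hWconst hrow hrowhat
    hcol hcolhat
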